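/- arXiv:1612.05381 — 2 statements merged into one kernel-verified Lean document; each statement's English description precedes it below -/
import Mathlib

section
/- Let n and k be positive integers with C(n,2) − n + 4 ≤ k ≤ C(n,2) + n − 3⌊n/2⌋, excluding the case where n is odd and k = C(n,2) + n − 3⌊n/2⌋. Then f(n,k) = k; that is, every connected graph on n vertices with at least k edges has tmc at least k, and there exists a connected graph on n vertices with k − 1 edges whose tmc is less than k. -/
open SimpleGraph

/-- A walk in a total-colored graph is *total monochromatic* if all of its edges and
internal vertices have the same color. -/
def IsTotalMonoWalk {V : Type*} {G : SimpleGraph V} (ce : Sym2 V → ℕ) (cv : V → ℕ)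
    {u v : V} (w : G.Walk u v) : Prop :=
  ∃ c, (∀ e ∈ w.edges, ce e = c) ∧ ∀ x ∈ w.support.tail.dropLast, cv x = c

/-- A total coloring (edge coloring `ce`, vertex coloring `cv`) of `G` is a
*TMC-coloring* if any two vertices are connected by a total monochromatic path. -/
def IsTMCColoring {V : Type*} (G : SimpleGraph V) (ce : Sym2 V → ℕ) (cv : V → ℕ) : Prop :=
  ∀ u v : V, u ≠ v → ∃ w : G.Walk u v, w.IsPath ∧ IsTotalMonoWalk ce cv w

/-- The number of colors used by a total coloring of `G`:
colors appearing on edges of `G` together with colors appearing on vertices. -/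
noncomputable def colorsUsed {V : Type*} (G : SimpleGraph V) (ce : Sym2 V → ℕ) (cv : V → ℕ) : ℕ :=
  (ce '' G.edgeSet ∪ Set.range cv).ncard

/-- The total monochromatic connection number `tmc G`: the maximum number of colors
used in a TMC-coloring of `G`. -/
noncomputable def tmc {V : Type*} [Fintype V] (G : SimpleGraph V) : ℕ :=
  sSup {k | ∃ ce cv, IsTMCColoring G ce cv ∧ colorsUsed G ce cv = k}

/-!
In a TMC-colouring, a vertex `v` with a non-neighbour `u` is joined to `u` by a monochromatic
path of length at least two, whose second vertex `x v` has the colour of the edge `v (x v)`.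
If every vertex has a non-neighbour, counting, colour by colour, the vertices `v` whose edge
`v (x v)` has a given colour against the edges and vertices of that colour shows that the
colouring uses at most `|E(G)|` colours.
Conversely, if every vertex is adjacent to one of two adjacent vertices `u`, `w`, colouring a
spanning double star centred at `u`, `w` together with `u` and `w` by one colour and every other
edge and vertex by its own colour gives `|E(G)|` colours. A connected graph whose complement has
fewer than `n` edges has a vertex missing at most one other vertex, and such a vertex gives a
double star. For sharpness, take the complement of a set of `C(n,2) - k + 1` edges that covers
every vertex and avoids a fixed spanning tree: it is connected and no vertex is universal.
-/

open Finset

section TotalColoring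

variable {V : Type*} {G : SimpleGraph V} {ce : Sym2 V → ℕ} {cv : V → ℕ}

theorem SimpleGraph.Walk.IsPath.ne_of_mem_support_tail_dropLast {a b z : V} {p : G.Walk a b}
    (hp : p.IsPath) (hz : z ∈ p.support.tail.dropLast) : z ≠ a ∧ z ≠ b := by
  have hnodup := hp.support_nodup
  constructor
  · rintro rfl
    rw [← p.cons_tail_support, List.nodup_cons] at hnodup
    exact hnodup.1 (List.mem_of_mem_dropLast hz)
  · rintro rfl
    rw [← List.tail_dropLast] at hz
    rw [← List.dropLast_append_getLast p.support_ne_nil, p.getLast_support,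
      List.nodup_append] at hnodup
    exact hnodup.2.2 _ (List.mem_of_mem_tail hz) _ (List.mem_singleton_self _) rfl

theorem exists_isPath_isTotalMonoWalk {a b : V} (p : G.Walk a b) (c : ℕ)
    (hE : ∀ e ∈ p.edges, ce e = c)
    (hV : ∀ z ∈ p.support, z ≠ a → z ≠ b → cv z = c) :
    ∃ q : G.Walk a b, q.IsPath ∧ IsTotalMonoWalk ce cv q := by
  classical
  refine ⟨p.bypass, p.bypass_isPath, c, fun e he => hE e (p.edges_bypass_subset_edges he),
    fun z hz => ?_⟩
  obtain ⟨hza, hzb⟩ := p.bypass_isPath.ne_of_mem_support_tail_dropLast hz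
  exact hV z (p.support_bypass_subset_support
    (List.mem_of_mem_tail (List.mem_of_mem_dropLast hz))) hza hzb

theorem IsTMCColoring.exists_adj_color_eq (h : IsTMCColoring G ce cv) {v u : V} (hne : v ≠ u)
    (hnadj : ¬G.Adj v u) : ∃ x, G.Adj v x ∧ cv x = ce s(v, x) := by
  obtain ⟨p, -, c, hce, hcv⟩ := h v u hne
  match p with
  | .nil => exact absurd rfl hne
  | .cons hvx .nil => exact absurd hvx hnadj
  | .cons (v := x) hvx (.cons _ _) =>
    refine ⟨x, hvx, (hcv x ?_).trans (hce _ (by simp)).symm⟩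
    simp [List.dropLast_cons_of_ne_nil]

theorem ncard_edgeSet_eq_card_edgeFinset [Fintype G.edgeSet] :
    G.edgeSet.ncard = #G.edgeFinset := by
  rw [← SimpleGraph.coe_edgeFinset, Set.ncard_coe_finset]

theorem colorsUsed_eq_card [Fintype V] [DecidableEq V] [DecidableRel G.Adj] :
    colorsUsed G ce cv = #(G.edgeFinset.image ce ∪ univ.image cv) := by
  rw [colorsUsed, ← Set.ncard_coe_finset, coe_union, coe_image, coe_image,
    SimpleGraph.coe_edgeFinset, coe_univ, Set.image_univ]

theorem IsTMCColoring.colorsUsed_le_tmc [Fintype V] (h : IsTMCColoring G ce cv) :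
    colorsUsed G ce cv ≤ tmc G := by
  classical
  refine le_csSup ⟨#G.edgeFinset + Fintype.card V, ?_⟩ ⟨ce, cv, h, rfl⟩
  rintro _ ⟨ce, cv, -, rfl⟩
  rw [colorsUsed_eq_card]
  exact (card_union_le _ _).trans (add_le_add card_image_le card_image_le)

theorem tmc_le [Fintype V] {m : ℕ}
    (h : ∀ ce cv, IsTMCColoring G ce cv → colorsUsed G ce cv ≤ m) : tmc G ≤ m :=
  csSup_le' fun _ ⟨ce, cv, hc, hk⟩ => hk ▸ h ce cv hc

end TotalColoring

section Counting

variable {V α : Type*} [Fintype V] [DecidableEq V] [DecidableEq α] {E : Finset (Sym2 V)}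
  {ce : Sym2 V → α} {cv : V → α} {x : V → V}

theorem card_fiber_add_one_le (hE : ∀ v, s(v, x v) ∈ E) (hx : ∀ v, cv (x v) = ce s(v, x v))
    {c : α} (hc : c ∈ E.image ce) :
    #{v | ce s(v, x v) = c} + 1 ≤ #{e ∈ E | ce e = c} + #{v | cv v = c} := by
  set A : Finset V := {v | ce s(v, x v) = c}
  set M : Finset (Sym2 V) := {e ∈ E | ce e = c}
  have hxA : ∀ v ∈ A, cv (x v) = c := fun v hv => (hx v).trans (mem_filter.1 hv).2
  have hMA : ∀ v ∈ A, s(v, x v) ∈ M := fun v hv =>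
    mem_filter.2 ⟨hE v, (mem_filter.1 hv).2⟩
  have hinj : Set.InjOn (fun v => s(v, x v)) ({v ∈ A | ¬cv v = c} : Finset V) := by
    intro v hv v' hv' heq
    rw [mem_coe, mem_filter] at hv hv'
    rcases Sym2.eq_iff.1 heq with ⟨h, -⟩ | ⟨h, -⟩
    · exact h
    · exact absurd (h ▸ hxA v' hv'.1) hv.2
  have hsplit := card_filter_add_card_filter_not (s := A) (fun v => cv v = c)
  have hI : #{v ∈ A | cv v = c} ≤ #{v | cv v = c} :=
    card_le_card fun v hv => mem_filter.2 ⟨mem_univ v, (mem_filter.1 hv).2⟩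
  rcases ({v ∈ A | cv v = c} : Finset V).eq_empty_or_nonempty with hA₀ | ⟨v₀, hv₀⟩
  · have hM : #{v ∈ A | ¬cv v = c} ≤ #M :=
      card_le_card_of_injOn _ (fun v hv => hMA v (mem_filter.1 hv).1) hinj
    rw [hA₀, card_empty] at hsplit
    rcases A.eq_empty_or_nonempty with hA | ⟨v, hv⟩
    · obtain ⟨e, he, hec⟩ := mem_image.1 hc
      have : 0 < #M := card_pos.2 ⟨e, mem_filter.2 ⟨he, hec⟩⟩
      rw [hA, card_empty] at hsplit ⊢
      omega
    · have : 0 < #({v | cv v = c} : Finset V) :=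
        card_pos.2 ⟨x v, mem_filter.2 ⟨mem_univ _, hxA v hv⟩⟩
      omega
  · obtain ⟨hv₀A, hv₀c⟩ := mem_filter.1 hv₀
    -- the edge `s(v₀, x v₀)` has colour `c` but is not hit by the injection
    have hM : #{v ∈ A | ¬cv v = c} ≤ #(M.erase s(v₀, x v₀)) := by
      refine card_le_card_of_injOn _ (fun v hv => ?_) hinj
      obtain ⟨hvA, hvc⟩ := mem_filter.1 hv
      refine mem_erase.2 ⟨fun heq => hvc ?_, hMA v hvA⟩
      rcases Sym2.eq_iff.1 heq with ⟨rfl, -⟩ | ⟨rfl, -⟩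
      · exact hv₀c
      · exact hxA v₀ hv₀A
    rw [card_erase_of_mem (hMA v₀ hv₀A)] at hM
    have : 0 < #M := card_pos.2 ⟨_, hMA v₀ hv₀A⟩
    omega

theorem card_image_union_image_le (hE : ∀ v, s(v, x v) ∈ E)
    (hx : ∀ v, cv (x v) = ce s(v, x v)) : #(E.image ce ∪ univ.image cv) ≤ #E := by
  have hsum := sum_le_sum fun c hc => card_fiber_add_one_le hE hx (c := c) hc
  rw [sum_add_distrib, sum_add_distrib,
    ← card_eq_sum_card_fiberwise fun v _ => mem_image_of_mem ce (hE v),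
    ← card_eq_sum_card_fiberwise fun e he => mem_image_of_mem ce he,
    sum_card_fiberwise_eq_card_filter, sum_const, smul_eq_mul, mul_one] at hsum
  have hsplit := card_filter_add_card_filter_not (s := univ) (fun v => cv v ∈ E.image ce)
  have hsub : E.image ce ∪ univ.image cv ⊆
      E.image ce ∪ ({v | cv v ∉ E.image ce} : Finset V).image cv := by
    intro c hc
    simp only [mem_union, mem_image, mem_univ, true_and] at hc
    rcases hc with hc | ⟨v, rfl⟩
    · exact mem_union_left _ (mem_image.2 hc)
    · by_cases hv : cv v ∈ E.image ce
      · exact mem_union_left _ hv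
      · exact mem_union_right _ (mem_image_of_mem cv (mem_filter.2 ⟨mem_univ v, hv⟩))
  calc #(E.image ce ∪ univ.image cv)
      ≤ #(E.image ce) + #({v | cv v ∉ E.image ce} : Finset V) :=
        (card_le_card hsub).trans ((card_union_le _ _).trans (add_le_add le_rfl card_image_le))
    _ ≤ #E := by omega

end Counting

theorem tmc_le_ncard_edgeSet {V : Type*} [Fintype V] {G : SimpleGraph V}
    (h : ∀ v, ∃ u, v ≠ u ∧ ¬G.Adj v u) : tmc G ≤ G.edgeSet.ncard := by
  classical
  refine tmc_le fun ce cv hc => ?_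
  choose x hadj hx using fun v =>
    (h v).elim fun _ ⟨hne, hnadj⟩ => hc.exists_adj_color_eq hne hnadj
  rw [colorsUsed_eq_card, ncard_edgeSet_eq_card_edgeFinset]
  exact card_image_union_image_le (fun v => G.mem_edgeFinset.2 (hadj v)) hx

section DoubleStar

variable {V : Type*} [Fintype V] [DecidableEq V] {G : SimpleGraph V} [DecidableRel G.Adj]
  {u w : V}

/-- The edges of a spanning double star of `G` with centres `u` and `w`, when every vertex is
adjacent to `u` or `w`. -/
def doubleStarEdges (G : SimpleGraph V) [DecidableRel G.Adj] (u w : V) : Finset (Sym2 V) :=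
  (univ.erase u).image fun y => if G.Adj u y then s(u, y) else s(w, y)

theorem exists_walk_doubleStarEdges (h : ∀ y, y ≠ u → G.Adj u y ∨ G.Adj w y) (y : V) :
    ∃ p : G.Walk y u, (∀ e ∈ p.edges, e ∈ doubleStarEdges G u w) ∧
      ∀ z ∈ p.support, z = y ∨ z = u ∨ z = w := by
  have hmem : ∀ y, y ≠ u →
      (if G.Adj u y then s(u, y) else s(w, y)) ∈ doubleStarEdges G u w :=
    fun y hy => mem_image_of_mem _ (mem_erase.2 ⟨hy, mem_univ y⟩)
  by_cases hyu : y = u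
  · subst hyu
    exact ⟨.nil, by simp, by simp⟩
  by_cases huy : G.Adj u y
  · refine ⟨.cons huy.symm .nil, ?_, by simp⟩
    simpa [huy, Sym2.eq_swap] using hmem y hyu
  have hwy := (h y hyu).resolve_left huy
  have hwu : w ≠ u := by rintro rfl; exact huy hwy
  have huw : G.Adj u w := (h w hwu).resolve_right (G.irrefl (v := w))
  refine ⟨.cons hwy.symm (.cons huw.symm .nil), ?_, by simp⟩
  have h₁ := hmem y hyu
  have h₂ := hmem w hwu
  simp only [huy, huw, if_true, if_false] at h₁ h₂
  simp [Sym2.eq_swap, h₁, h₂]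

theorem isTMCColoring_of_doubleStar (h : ∀ y, y ≠ u → G.Adj u y ∨ G.Adj w y)
    {ce : Sym2 V → ℕ} {cv : V → ℕ} {c : ℕ}
    (hce : ∀ e ∈ doubleStarEdges G u w, ce e = c)
    (hu : cv u = c) (hw : cv w = c) : IsTMCColoring G ce cv := by
  intro a b _
  obtain ⟨p, hpE, hpV⟩ := exists_walk_doubleStarEdges h a
  obtain ⟨q, hqE, hqV⟩ := exists_walk_doubleStarEdges h b
  refine exists_isPath_isTotalMonoWalk (p.append q.reverse) c (fun e he => ?_)
    fun z hz hza hzb => ?_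
  · rw [SimpleGraph.Walk.edges_append, SimpleGraph.Walk.edges_reverse, List.mem_append,
      List.mem_reverse] at he
    exact hce e (he.elim (hpE e) (hqE e))
  · rw [SimpleGraph.Walk.mem_support_append_iff, SimpleGraph.Walk.support_reverse,
      List.mem_reverse] at hz
    have : z = u ∨ z = w := by
      rcases hz with hz | hz
      · exact (hpV z hz).resolve_left hza
      · exact (hqV z hz).resolve_left hzb
    rcases this with rfl | rfl
    · exact hu
    · exact hw

theorem doubleStarEdges_subset_edgeFinset (h : ∀ y, y ≠ u → G.Adj u y ∨ G.Adj w y) :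
    doubleStarEdges G u w ⊆ G.edgeFinset := by
  intro e he
  obtain ⟨y, hy, rfl⟩ := mem_image.1 he
  have hyu := (mem_erase.1 hy).1
  split_ifs with huy
  · exact G.mem_edgeFinset.2 huy
  · exact G.mem_edgeFinset.2 ((h y hyu).resolve_left huy)

end DoubleStar

theorem ncard_edgeSet_le_tmc_of_forall_adj_or_adj {V : Type*} [Fintype V] {G : SimpleGraph V}
    {u w : V} (h : ∀ y, y ≠ u → G.Adj u y ∨ G.Adj w y) : G.edgeSet.ncard ≤ tmc G := by
  classical
  set T := doubleStarEdges G u w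
  obtain ⟨ι, hι⟩ := exists_injective_nat (V ⊕ Sym2 V)
  let cv : V → ℕ := fun y => ι (.inl (if y = w then u else y))
  let ce : Sym2 V → ℕ := fun e => if e ∈ T then ι (.inl u) else ι (.inr e)
  have htmc : IsTMCColoring G ce cv :=
    isTMCColoring_of_doubleStar h (fun e he => if_pos he) (by simp [cv]) (by simp [cv])
  have hcv : Set.InjOn cv ↑(univ.erase u) := by
    intro y hy y' hy' hyy'
    have := Sum.inl_injective (hι hyy')
    rw [mem_coe, mem_erase] at hy hy'
    split_ifs at this <;> grind
  have hce : Set.InjOn ce ↑(G.edgeFinset \ T) := by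
    intro e he e' he' hee'
    rw [mem_coe, mem_sdiff] at he he'
    simp only [ce, if_neg he.2, if_neg he'.2] at hee'
    exact Sum.inr_injective (hι hee')
  have hdisj : Disjoint ((G.edgeFinset \ T).image ce) ((univ.erase u).image cv) := by
    refine disjoint_left.2 fun c hc hc' => ?_
    obtain ⟨e, he, rfl⟩ := mem_image.1 hc
    obtain ⟨y, -, hy⟩ := mem_image.1 hc'
    simp only [ce, cv, if_neg (mem_sdiff.1 he).2] at hy
    exact Sum.inl_ne_inr (hι hy)
  refine le_trans ?_ (htmc.colorsUsed_le_tmc)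
  rw [colorsUsed_eq_card, ncard_edgeSet_eq_card_edgeFinset]
  calc #G.edgeFinset = #(G.edgeFinset \ T) + #T :=
        (card_sdiff_add_card_eq_card (doubleStarEdges_subset_edgeFinset h)).symm
    _ ≤ #(G.edgeFinset \ T) + #(univ.erase u) := add_le_add le_rfl card_image_le
    _ = #((G.edgeFinset \ T).image ce ∪ (univ.erase u).image cv) := by
        rw [card_union_of_disjoint hdisj, card_image_of_injOn hce, card_image_of_injOn hcv]
    _ ≤ #(G.edgeFinset.image ce ∪ univ.image cv) :=
        card_le_card (union_subset_union (image_subset_image sdiff_subset)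
          (image_subset_image (subset_univ _)))

theorem exists_degree_le_one_of_card_edgeFinset_lt {V : Type*} [Fintype V] {G : SimpleGraph V}
    [DecidableRel G.Adj] (h : #G.edgeFinset < Fintype.card V) : ∃ u, G.degree u ≤ 1 := by
  by_contra! hdeg
  have hsum := sum_le_sum fun v (_ : v ∈ univ) => Nat.succ_le_of_lt (hdeg v)
  rw [G.sum_degrees_eq_twice_card_edges, sum_const, card_univ, smul_eq_mul] at hsum
  omega

theorem SimpleGraph.Connected.exists_forall_adj_or_adj {V : Type*} [Fintype V] [DecidableEq V]
    {G : SimpleGraph V} [DecidableRel G.Adj] (hG : G.Connected) {u : V} (hu : Gᶜ.degree u ≤ 1) :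
    ∃ w, ∀ y, y ≠ u → G.Adj u y ∨ G.Adj w y := by
  by_cases hx : ∃ x, x ≠ u ∧ ¬G.Adj u x
  · obtain ⟨x, hxu, hux⟩ := hx
    have : Nontrivial V := ⟨⟨x, u, hxu⟩⟩
    obtain ⟨w, hxw⟩ := hG.preconnected.exists_adj_of_nontrivial x
    refine ⟨w, fun y hyu => or_iff_not_imp_left.2 fun huy => ?_⟩
    obtain rfl : y = x := by
      by_contra hyx
      have hsub : ({x, y} : Finset V) ⊆ Gᶜ.neighborFinset u := by
        intro z hz
        rw [mem_insert, mem_singleton] at hz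
        rw [mem_neighborFinset, compl_adj]
        rcases hz with rfl | rfl
        · exact ⟨hxu.symm, hux⟩
        · exact ⟨hyu.symm, huy⟩
      have := card_le_card hsub
      rw [card_pair (Ne.symm hyx), card_neighborFinset_eq_degree] at this
      omega
    exact hxw.symm
  · push Not at hx
    exact ⟨u, fun y hy => .inl (hx y hy)⟩

theorem SimpleGraph.Connected.ncard_edgeSet_le_tmc {V : Type*} [Fintype V] {G : SimpleGraph V}
    (hG : G.Connected) (h : Gᶜ.edgeSet.ncard < Fintype.card V) : G.edgeSet.ncard ≤ tmc G := by
  classical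
  obtain ⟨u, hu⟩ := exists_degree_le_one_of_card_edgeFinset_lt (G := Gᶜ)
    (by rwa [← ncard_edgeSet_eq_card_edgeFinset])
  obtain ⟨w, hw⟩ := hG.exists_forall_adj_or_adj hu
  exact ncard_edgeSet_le_tmc_of_forall_adj_or_adj hw

theorem ncard_edgeSet_add_ncard_edgeSet_compl {V : Type*} [Fintype V] (G : SimpleGraph V) :
    G.edgeSet.ncard + Gᶜ.edgeSet.ncard = (Fintype.card V).choose 2 := by
  classical
  rw [← Set.ncard_union_eq (G.disjoint_edgeSet.2 disjoint_compl_right), ← edgeSet_sup,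
    sup_compl_eq_top, ncard_edgeSet_eq_card_edgeFinset, card_edgeFinset_top_eq_card_choose_two]

theorem two_mul_le_choose_two_add_three : ∀ n : ℕ, 2 * n ≤ n.choose 2 + 3
  | 0 | 1 | 2 => by decide
  | n + 3 => by
    have := two_mul_le_choose_two_add_three (n + 2)
    have hsucc : (n + 3).choose 2 = (n + 2).choose 1 + (n + 2).choose 2 :=
      Nat.choose_succ_succ' (n + 2) 1
    rw [Nat.choose_one_right] at hsucc
    omega

theorem SimpleGraph.connected_of_forall_adj {V : Type*} {G : SimpleGraph V} {o z w : V}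
    (hzw : G.Adj z w) (h : ∀ v, v ≠ o → v ≠ z → G.Adj v o) : G.Connected := by
  have hreach : ∀ v, v ≠ z → G.Reachable v o := fun v hvz => by
    by_cases hvo : v = o
    · rw [hvo]
    · exact (h v hvo hvz).reachable
  refine (connected_iff_exists_forall_reachable G).2 ⟨o, fun v => Reachable.symm ?_⟩
  by_cases hvz : v = z
  · subst hvz
    exact hzw.reachable.trans (hreach w hzw.ne.symm)
  · exact hreach v hvz

theorem exists_ncard_edgeSet_add_eq {V : Type*} [Fintype V] [DecidableEq V]
    {B T : Finset (Sym2 V)} {c : ℕ} (hBT : B ⊆ (⊤ : SimpleGraph V).edgeFinset \ T)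
    (hc₁ : #B ≤ c) (hc₂ : c + #T ≤ (Fintype.card V).choose 2) :
    ∃ G : SimpleGraph V, G.edgeSet.ncard + c = (Fintype.card V).choose 2 ∧
      (∀ a b, a ≠ b → s(a, b) ∈ T → G.Adj a b) ∧
      ∀ a b, s(a, b) ∈ B → ¬G.Adj a b := by
  have hcT : c ≤ #((⊤ : SimpleGraph V).edgeFinset \ T) := by
    have := le_card_sdiff T (⊤ : SimpleGraph V).edgeFinset
    rw [card_edgeFinset_top_eq_card_choose_two] at this
    omega
  obtain ⟨U, hBU, hUT, hU⟩ := exists_subsuperset_card_eq hBT hc₁ hcT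
  have hE : (fromEdgeSet (U : Set (Sym2 V))).edgeSet = U := by
    ext e
    rw [edgeSet_fromEdgeSet, Set.mem_sdiff, mem_coe, and_iff_left_iff_imp]
    exact fun he => (⊤ : SimpleGraph V).not_isDiag_of_mem_edgeSet
      (mem_edgeFinset.1 (mem_sdiff.1 (hUT he)).1)
  have hadj : ∀ a b,
      (fromEdgeSet (U : Set (Sym2 V)))ᶜ.Adj a b ↔ a ≠ b ∧ s(a, b) ∉ U := by
    intro a b
    simp only [compl_adj, fromEdgeSet_adj, mem_coe]
    tauto
  refine ⟨(fromEdgeSet (U : Set (Sym2 V)))ᶜ, ?_, fun a b hab hT => (hadj a b).2 ⟨hab, ?_⟩,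
    fun a b hB h => ((hadj a b).1 h).2 (hBU hB)⟩
  · have := ncard_edgeSet_add_ncard_edgeSet_compl (fromEdgeSet (U : Set (Sym2 V)))
    rw [hE, Set.ncard_coe_finset] at this
    omega
  · exact fun hU => (mem_sdiff.1 (hUT hU)).2 hT

/-- The edges `{2i, 2i + 1}` of `K_n`, together with `{n - 1, 0}` when `n` is odd. -/
def finEdgeCover (n : ℕ) : Finset (Sym2 (Fin n)) :=
  univ.image fun i : Fin ((n + 1) / 2) =>
    s(⟨2 * i, by omega⟩, ⟨if 2 * i + 1 < n then 2 * i + 1 else 0, by split_ifs <;> omega⟩)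

theorem card_finEdgeCover_le (n : ℕ) : #(finEdgeCover n) ≤ (n + 1) / 2 :=
  card_image_le.trans (by simp)

theorem exists_mem_finEdgeCover {n : ℕ} (hn : 2 ≤ n) (v : Fin n) :
    ∃ u, v ≠ u ∧ s(v, u) ∈ finEdgeCover n := by
  have := v.isLt
  by_cases hv : v.val % 2 = 0
  · refine ⟨⟨if v + 1 < n then v + 1 else 0, by split_ifs <;> omega⟩, ?_,
      mem_image.2 ⟨⟨v / 2, by omega⟩, mem_univ _, ?_⟩⟩
    · simp only [Ne, Fin.ext_iff]
      split_ifs <;> omega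
    · simp only [Sym2.eq_iff, Fin.ext_iff]
      split_ifs <;> omega
  · refine ⟨⟨v - 1, by omega⟩, ?_, mem_image.2 ⟨⟨v / 2, by omega⟩, mem_univ _, ?_⟩⟩
    · simp only [Ne, Fin.ext_iff]
      omega
    · simp only [Sym2.eq_iff, Fin.ext_iff]
      split_ifs <;> omega

theorem exists_connected_forall_exists_not_adj {n c : ℕ} (hn : 4 ≤ n)
    (hc₁ : (n + 1) / 2 ≤ c) (hc₂ : c + n ≤ n.choose 2) :
    ∃ G : SimpleGraph (Fin n), G.Connected ∧ G.edgeSet.ncard + c = n.choose 2 ∧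
      ∀ v, ∃ u, v ≠ u ∧ ¬G.Adj v u := by
  classical
  let hub : Fin n → Fin n := fun v => if v.val = 0 then ⟨2, by omega⟩ else ⟨1, by omega⟩
  -- a spanning tree: the star at `1` together with the edge `{0, 2}`
  let T : Finset (Sym2 (Fin n)) := univ.image fun v => s(v, hub v)
  have hBT : finEdgeCover n ⊆ (⊤ : SimpleGraph (Fin n)).edgeFinset \ T := by
    intro e he
    obtain ⟨i, -, rfl⟩ := mem_image.1 he
    have := i.isLt
    simp only [mem_sdiff, mem_edgeFinset, mem_edgeSet, top_adj, T, mem_image, mem_univ,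
      true_and, not_exists, Ne, Fin.ext_iff, Sym2.eq_iff, hub]
    refine ⟨by split_ifs <;> omega, fun v => ?_⟩
    split_ifs <;> simp only [and_false, false_or] <;> omega
  obtain ⟨G, hcount, hT, hBG⟩ := exists_ncard_edgeSet_add_eq hBT
    ((card_finEdgeCover_le n).trans hc₁)
    (by simpa using (Nat.add_le_add_left (card_image_le.trans (by simp)) c).trans hc₂)
  have hhub : ∀ v, v ≠ hub v → G.Adj v (hub v) := fun v hv =>
    hT v _ hv (mem_image_of_mem _ (mem_univ v))
  refine ⟨G, connected_of_forall_adj (o := ⟨1, by omega⟩) (z := ⟨0, by omega⟩)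
    (hhub _ (by simp [hub, Fin.ext_iff])) fun v hv1 hv0 => ?_, by simpa using hcount,
    fun v => ?_⟩
  · simp only [ne_eq, Fin.ext_iff] at hv1 hv0
    simpa [hub, hv0] using hhub v (by simp [hub, hv0, hv1, Fin.ext_iff])
  · obtain ⟨u, hvu, hvuB⟩ := exists_mem_finEdgeCover (by omega) v
    exact ⟨u, hvu, hBG v u hvuB⟩

theorem stmt17 (n k : ℕ) (hk1 : n.choose 2 - n + 4 ≤ k)
    (hk2 : k ≤ n.choose 2 + n - 3 * (n / 2))
    (hexc : ¬(Odd n ∧ k = n.choose 2 + n - 3 * (n / 2))) :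
    (∀ (V : Type) [Fintype V] (G : SimpleGraph V), G.Connected →
      Fintype.card V = n → k ≤ G.edgeSet.ncard → k ≤ tmc G) ∧
    (∃ G : SimpleGraph (Fin n), G.Connected ∧
      G.edgeSet.ncard = k - 1 ∧ tmc G < k) := by
  have hn := two_mul_le_choose_two_add_three n
  refine ⟨fun V _ G hG hV hk => ?_, ?_⟩
  · subst hV
    have hcompl := ncard_edgeSet_add_ncard_edgeSet_compl G
    have hpos : 0 < Fintype.card V := Fintype.card_pos_iff.2 hG.nonempty
    exact hk.trans (hG.ncard_edgeSet_le_tmc (by omega))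
  · rw [Nat.odd_iff] at hexc
    obtain ⟨G, hG, hcard, hcover⟩ :=
      exists_connected_forall_exists_not_adj (n := n) (c := n.choose 2 + 1 - k) (by omega)
        (by omega) (by omega)
    exact ⟨G, hG, by omega, (tmc_le_ncard_edgeSet hcover).trans_lt (by omega)⟩
end

section
/- Let n and k be positive integers with n ≤ k ≤ C(n,2) + n. Then: g(n,k) = k − n + t if C(n−t,2) + t(n−t−1) + n ≤ k ≤ C(n−t,2) + t(n−t) + n − 2 for some t with 2 ≤ t ≤ n − 1; g(n,k) = k − n + t − 1 if k = C(n−t,2) + t(n−t) + n − 1 for some t with 2 ≤ t ≤ n − 1; g(n,k) = C(n,2) − 1 if k = C(n,2) + n − 1; and g(n,k) = C(n,2) if k = C(n,2) + n. -/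
open SimpleGraph

/-- `gfun n k` is the maximum integer `g` (at most the number of edges of a complete
graph on `n` vertices) such that every connected graph of order `n` with at most `g`
edges has total monochromatic connection number at most `k`. -/
noncomputable def gfun (n k : ℕ) : ℕ :=
  sSup {g : ℕ | g ≤ n.choose 2 ∧
    ∀ (V : Type) [Fintype V] (G : SimpleGraph V), G.Connected →
      Fintype.card V = n → G.edgeSet.ncard ≤ g → tmc G ≤ k}

/-!
Upper bound: in a TMC-colouring a non-adjacent pair `u v` is joined by a monochromatic path of
length at least two, so its colour `c` is also a vertex colour and `u`, `v` lie in one component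
of the subgraph `G_c` of edges of colour `c`. A graph with `e` edges has at most `C(e, 2)`
non-adjacent pairs inside its components, hence
`C(n, 2) - m ≤ ∑_c C(e_c + n_c - 1, 2) ≤ C(m + n - #colours, 2)`, and a graph with
`C(t - 1, 2) + m < C(n, 2)` has `tmc ≤ m + n - t`.

Lower bound: if a vertex `z` is adjacent to a set `L` containing both ends of every non-adjacent
pair, giving `z` and its edges to `L` one colour and everything else its own colour is a
TMC-colouring with at least `m + n - |L|` colours. Complements of graphs with `e ≤ C(t, 2)` edges
inside a `t`-set are such graphs with `|L| = t`, and they realise every edge count between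
`C(n, 2) - C(t, 2)` and `C(n, 2)`. Comparing the two bounds gives `g(n, k)`.
-/

open Finset

theorem choose_two_succ (a : ℕ) : (a + 1).choose 2 = a.choose 2 + a := by
  simp [Nat.choose_succ_succ', add_comm]

theorem choose_two_add (a b : ℕ) : (a + b).choose 2 = a.choose 2 + b.choose 2 + a * b := by
  induction b with
  | zero => simp
  | succ b ih => rw [← add_assoc, choose_two_succ, ih, choose_two_succ]; ring

theorem choose_two_eq_of_le {n t : ℕ} (h : t ≤ n) :
    n.choose 2 = (n - t).choose 2 + t * (n - t) + t.choose 2 := by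
  have := choose_two_add (n - t) t
  rw [Nat.sub_add_cancel h] at this
  rw [this]
  ring

theorem sum_choose_two_le {ι : Type*} (s : Finset ι) (f : ι → ℕ) :
    ∑ i ∈ s, (f i).choose 2 ≤ (∑ i ∈ s, f i).choose 2 := by
  classical
  induction s using Finset.induction_on with
  | empty => simp
  | insert a s ha ih => rw [sum_insert ha, sum_insert ha, choose_two_add]; omega

theorem mem_image_offDiag_iff {α : Type*} [DecidableEq α] {T : Finset α} {z : Sym2 α} :
    z ∈ T.offDiag.image Sym2.mk.uncurry ↔ ¬z.IsDiag ∧ ∀ x ∈ z, x ∈ T := by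
  induction z using Sym2.ind with
  | _ a b =>
    simp only [mem_image, mem_offDiag, Prod.exists, Function.uncurry_apply_pair, Sym2.eq_iff,
      Sym2.mk_isDiag_iff, Sym2.mem_iff, forall_eq_or_imp, forall_eq]
    constructor
    · rintro ⟨x, y, ⟨hx, hy, hxy⟩, ⟨rfl, rfl⟩ | ⟨rfl, rfl⟩⟩
      exacts [⟨hxy, hx, hy⟩, ⟨hxy.symm, hy, hx⟩]
    · rintro ⟨hab, ha, hb⟩
      exact ⟨a, b, ⟨ha, hb, hab⟩, Or.inl ⟨rfl, rfl⟩⟩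

theorem card_le_choose_two_of_forall_mem {α : Type*} [DecidableEq α] {T : Finset α}
    {s : Finset (Sym2 α)} (hs : ∀ z ∈ s, ¬z.IsDiag ∧ ∀ x ∈ z, x ∈ T) :
    #s ≤ (#T).choose 2 := by
  rw [← Sym2.card_image_offDiag]
  exact card_le_card fun z hz => mem_image_offDiag_iff.2 (hs z hz)

namespace SimpleGraph

variable {V : Type*}

section Graph

variable {G H : SimpleGraph V} {ce : Sym2 V → ℕ} {cv : V → ℕ}

theorem Reachable.of_mem_sym2 {a b x y : V} (h : H.Reachable a b) (hx : x ∈ s(a, b))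
    (hy : y ∈ s(a, b)) : H.Reachable x y := by
  rw [Sym2.mem_iff] at hx hy
  rcases hx with rfl | rfl <;> rcases hy with rfl | rfl
  exacts [.rfl, h, h.symm, .rfl]

theorem mem_edgeSet_compl_iff {z : Sym2 V} :
    z ∈ Hᶜ.edgeSet ↔ ¬z.IsDiag ∧ z ∉ H.edgeSet := by
  induction z using Sym2.ind with
  | _ a b => simp [compl_adj]

def colorSubgraph (G : SimpleGraph V) (ce : Sym2 V → ℕ) (c : ℕ) : SimpleGraph V :=
  fromEdgeSet {e ∈ G.edgeSet | ce e = c}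

theorem mem_edgeSet_colorSubgraph {c : ℕ} {e : Sym2 V} :
    e ∈ (colorSubgraph G ce c).edgeSet ↔ e ∈ G.edgeSet ∧ ce e = c := by
  rw [colorSubgraph, edgeSet_fromEdgeSet, Set.mem_sdiff, Set.mem_sep_iff, Sym2.mem_diagSet,
    and_iff_left_iff_imp]
  exact fun h => G.not_isDiag_of_mem_edgeSet h.1

theorem colorSubgraph_le (c : ℕ) : colorSubgraph G ce c ≤ G := by
  rw [← edgeSet_subset_edgeSet]
  exact fun e he => (mem_edgeSet_colorSubgraph.1 he).1

theorem IsTMCColoring.exists_colorSubgraph_reachable (hT : IsTMCColoring G ce cv) {z : Sym2 V}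
    (hz : z ∈ Gᶜ.edgeSet) :
    ∃ c ∈ Set.range cv, ∀ x ∈ z, ∀ y ∈ z, (colorSubgraph G ce c).Reachable x y := by
  induction z using Sym2.ind with
  | _ u v =>
    rw [mem_edgeSet, compl_adj] at hz
    obtain ⟨w, -, c, hce, hcv⟩ := hT u v hz.1
    have hreach : (colorSubgraph G ce c).Reachable u v :=
      ⟨w.transfer _ fun e he =>
        mem_edgeSet_colorSubgraph.2 ⟨w.edges_subset_edgeSet he, hce e he⟩⟩
    refine ⟨c, ?_, fun x hx y hy => hreach.of_mem_sym2 hx hy⟩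
    -- `u` and `v` are not adjacent, so `w` has an internal vertex, which has colour `c`
    cases w with
    | nil => exact absurd rfl hz.1
    | @cons _ x _ hux w =>
      cases w with
      | nil => exact absurd hux hz.2
      | cons hxy w =>
        refine ⟨x, hcv x ?_⟩
        rw [Walk.support_cons, Walk.support_cons, List.tail_cons,
          List.dropLast_cons_of_ne_nil w.support_ne_nil]
        exact List.mem_cons_self

theorem compl_adj_of_support_subset {F : SimpleGraph V} {T : Set V} {z v : V}
    (hF : F.support ⊆ T) (hz : z ∉ T) (hv : v ≠ z) : Fᶜ.Adj z v :=
  (compl_adj F z v).2 ⟨hv.symm, fun h => hz (hF (F.mem_support.2 ⟨v, h⟩))⟩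

theorem connected_compl_of_support_subset {F : SimpleGraph V} {T : Set V} {z : V}
    (hF : F.support ⊆ T) (hz : z ∉ T) : Fᶜ.Connected :=
  (connected_iff_exists_forall_reachable _).2 ⟨z, fun v => by
    rcases eq_or_ne v z with rfl | hv
    exacts [.rfl, (compl_adj_of_support_subset hF hz hv).reachable]⟩

end Graph

section Fintype

variable [Fintype V] {G : SimpleGraph V} {ce : Sym2 V → ℕ} {cv : V → ℕ}

theorem colorsUsed_le_ncard_add_card (G : SimpleGraph V) (ce : Sym2 V → ℕ) (cv : V → ℕ) :
    colorsUsed G ce cv ≤ G.edgeSet.ncard + Fintype.card V :=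
  (Set.ncard_union_le _ _).trans <| add_le_add (Set.ncard_image_le) <| by
    rw [← Set.image_univ, ← Nat.card_eq_fintype_card, ← Set.ncard_univ]
    exact Set.ncard_image_le

theorem colorsUsed_le_tmc (hT : IsTMCColoring G ce cv) : colorsUsed G ce cv ≤ tmc G :=
  le_csSup ⟨_, by rintro _ ⟨ce, cv, -, rfl⟩; exact colorsUsed_le_ncard_add_card G ce cv⟩
    ⟨ce, cv, hT, rfl⟩

theorem tmc_le_of_forall {b : ℕ}
    (h : ∀ ce cv, IsTMCColoring G ce cv → colorsUsed G ce cv ≤ b) :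
    tmc G ≤ b :=
  csSup_le' <| by rintro _ ⟨ce, cv, hT, rfl⟩; exact h ce cv hT

theorem tmc_le_ncard_add_card (G : SimpleGraph V) : tmc G ≤ G.edgeSet.ncard + Fintype.card V :=
  tmc_le_of_forall fun ce cv _ => colorsUsed_le_ncard_add_card G ce cv

theorem colorsUsed_eq_card [DecidableRel G.Adj] :
    colorsUsed G ce cv = #(G.edgeFinset.image ce ∪ univ.image cv) := by
  rw [colorsUsed, ← Set.ncard_coe_finset, coe_union, coe_image, coe_image, coe_edgeFinset,
    coe_univ, Set.image_univ]

theorem colorsUsed_add_sum_eq [DecidableRel G.Adj] :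
    colorsUsed G ce cv + ∑ c ∈ G.edgeFinset.image ce ∪ univ.image cv,
      (#{e ∈ G.edgeFinset | ce e = c} + #{x | cv x = c} - 1) =
      #G.edgeFinset + Fintype.card V := by
  set K := G.edgeFinset.image ce ∪ univ.image cv
  have hpos : ∀ c ∈ K, 1 ≤ #{e ∈ G.edgeFinset | ce e = c} + #{x | cv x = c} := by
    intro c hc
    rcases mem_union.1 hc with h | h <;> obtain ⟨a, ha, rfl⟩ := mem_image.1 h
    · exact le_add_right (card_pos.2 ⟨a, mem_filter.2 ⟨ha, rfl⟩⟩)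
    · exact le_add_left (card_pos.2 ⟨a, mem_filter.2 ⟨ha, rfl⟩⟩)
  rw [colorsUsed_eq_card, card_eq_sum_card_fiberwise (f := ce) (t := K) fun e he =>
      mem_union_left _ (mem_image_of_mem ce he),
    ← card_univ, card_eq_sum_card_fiberwise (f := cv) (t := K) fun x hx =>
      mem_union_right _ (mem_image_of_mem cv hx),
    ← sum_add_distrib, card_eq_sum_ones, add_comm, ← sum_add_distrib]
  exact sum_congr rfl fun c hc => Nat.sub_add_cancel (hpos c hc)

-- shifted by one so that colour `0` stays free for the star
noncomputable def colorCode (x : Sym2 V ⊕ V) : ℕ :=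
  Fintype.equivFin (Sym2 V ⊕ V) x + 1

theorem colorCode_injective : Function.Injective (colorCode (V := V)) :=
  (add_left_injective 1).comp (Fin.val_injective.comp (Equiv.injective _))

theorem colorCode_ne_zero (x : Sym2 V ⊕ V) : colorCode x ≠ 0 :=
  Nat.succ_ne_zero _

section DecidableEq

variable [DecidableEq V]

theorem card_edgeFinset_add_card_edgeFinset_compl (G : SimpleGraph V) [DecidableRel G.Adj] :
    #G.edgeFinset + #Gᶜ.edgeFinset = (Fintype.card V).choose 2 := by
  rw [← card_edgeFinset_top_eq_card_choose_two, ← card_union_of_disjoint]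
  · congr 1
    ext e
    induction e using Sym2.ind with
    | _ a b =>
      simp only [mem_union, mem_edgeFinset, mem_edgeSet, compl_adj, edgeFinset_top,
        Set.mem_toFinset, Set.mem_compl_iff, Sym2.mem_diagSet, Sym2.mk_isDiag_iff]
      exact ⟨fun h => h.elim G.ne_of_adj And.left, fun h => (em _).imp_right (⟨h, ·⟩)⟩
  · refine Finset.disjoint_left.2 fun e h1 h2 => ?_
    induction e using Sym2.ind with
    | _ a b => simp_all [compl_adj]

section Components

variable {H : SimpleGraph V} [DecidableRel H.Adj]

open scoped Classical in
theorem card_eq_sum_card_filter_connectedComponent {X : Finset (Sym2 V)}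
    (hX : ∀ z ∈ X, ∀ x ∈ z, ∀ y ∈ z, H.Reachable x y) :
    #X = ∑ C : H.ConnectedComponent, #{z ∈ X | ∀ v ∈ z, H.connectedComponentMk v = C} := by
  rw [card_eq_sum_card_fiberwise (f := fun z => H.connectedComponentMk z.out.1) (t := univ)
    fun _ _ => mem_univ _]
  refine sum_congr rfl fun C _ => congrArg card <| filter_congr fun z hz => ?_
  exact ⟨fun h v hv => (ConnectedComponent.sound (hX z hz v hv _ z.out_fst_mem)).trans h,
    fun h => h _ z.out_fst_mem⟩

open scoped Classical in
theorem ConnectedComponent.card_le_card_edges_add_one (C : H.ConnectedComponent) :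
    #{v | H.connectedComponentMk v = C} ≤
      #{e ∈ H.edgeFinset | ∀ v ∈ e, H.connectedComponentMk v = C} + 1 := by
  have h := C.connected_toSimpleGraph.card_vert_le_card_edgeSet_add_one
  rw [Nat.card_eq_fintype_card, Nat.card_eq_fintype_card, ← edgeFinset_card] at h
  have hedges : #C.toSimpleGraph.edgeFinset ≤
      #{e ∈ H.edgeFinset | ∀ v ∈ e, H.connectedComponentMk v = C} := by
    refine card_le_card_of_injOn (Sym2.map Subtype.val) (fun e he => ?_)
      (Sym2.map.injective Subtype.val_injective).injOn
    induction e using Sym2.ind with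
    | _ a b =>
      rw [coe_edgeFinset, mem_edgeSet, ConnectedComponent.toSimpleGraph, induce_adj] at he
      simpa [he] using ⟨(C.mem_supp_iff a).1 a.2, (C.mem_supp_iff b).1 b.2⟩
  calc #{v | H.connectedComponentMk v = C} = Fintype.card C := by
        rw [Fintype.card_subtype]
        exact congrArg card (filter_congr fun v _ => (C.mem_supp_iff v).symm)
    _ ≤ _ := h.trans (Nat.add_le_add_right hedges 1)

open scoped Classical in
theorem card_filter_connectedComponent_le_choose_two (C : H.ConnectedComponent)
    {s : Finset (Sym2 V)} (hs : ∀ z ∈ s, z ∈ Hᶜ.edgeSet) :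
    #{z ∈ s | ∀ v ∈ z, H.connectedComponentMk v = C} ≤
      (#{e ∈ H.edgeFinset | ∀ v ∈ e, H.connectedComponentMk v = C}).choose 2 := by
  set sC := {z ∈ s | ∀ v ∈ z, H.connectedComponentMk v = C}
  set B := {e ∈ H.edgeFinset | ∀ v ∈ e, H.connectedComponentMk v = C}
  have hdisj : Disjoint sC B := Finset.disjoint_left.2 fun z hz hzB =>
    (mem_edgeSet_compl_iff.1 (hs z (mem_filter.1 hz).1)).2 (mem_edgeFinset.1 (mem_filter.1 hzB).1)
  have hpairs : #sC + #B ≤ (#{v | H.connectedComponentMk v = C}).choose 2 := by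
    rw [← card_union_of_disjoint hdisj]
    refine card_le_choose_two_of_forall_mem fun z hz => ?_
    rcases mem_union.1 hz with h | h <;> obtain ⟨hz, hC⟩ := mem_filter.1 h
    · exact ⟨(mem_edgeSet_compl_iff.1 (hs z hz)).1,
        fun x hx => mem_filter.2 ⟨mem_univ x, hC x hx⟩⟩
    · exact ⟨H.not_isDiag_of_mem_edgeSet (mem_edgeFinset.1 hz),
        fun x hx => mem_filter.2 ⟨mem_univ x, hC x hx⟩⟩
  have hcomp : (#{v | H.connectedComponentMk v = C}).choose 2 ≤ (#B).choose 2 + #B := by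
    rw [← choose_two_succ]
    exact Nat.choose_le_choose 2 C.card_le_card_edges_add_one
  omega

theorem card_le_choose_two_card_edgeFinset {s : Finset (Sym2 V)}
    (hs : ∀ z ∈ s, z ∈ Hᶜ.edgeSet ∧ ∀ x ∈ z, ∀ y ∈ z, H.Reachable x y) :
    #s ≤ (#H.edgeFinset).choose 2 := by
  classical
  have hE : ∀ e ∈ H.edgeFinset, ∀ x ∈ e, ∀ y ∈ e, H.Reachable x y := by
    intro e he
    induction e using Sym2.ind with
    | _ a b => exact fun x hx y hy => (mem_edgeFinset.1 he).reachable.of_mem_sym2 hx hy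
  calc #s = ∑ C : H.ConnectedComponent, #{z ∈ s | ∀ v ∈ z, H.connectedComponentMk v = C} :=
        card_eq_sum_card_filter_connectedComponent fun z hz => (hs z hz).2
    _ ≤ ∑ C : H.ConnectedComponent,
          (#{e ∈ H.edgeFinset | ∀ v ∈ e, H.connectedComponentMk v = C}).choose 2 :=
        sum_le_sum fun C _ => card_filter_connectedComponent_le_choose_two C fun z hz => (hs z hz).1
    _ ≤ (∑ C : H.ConnectedComponent,
          #{e ∈ H.edgeFinset | ∀ v ∈ e, H.connectedComponentMk v = C}).choose 2 :=
        sum_choose_two_le _ _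
    _ = (#H.edgeFinset).choose 2 := by rw [← card_eq_sum_card_filter_connectedComponent hE]

end Components

theorem card_le_choose_two_of_reachable_colorSubgraph [DecidableRel G.Adj] {c : ℕ} {s : Finset (Sym2 V)}
    (hs : ∀ z ∈ s,
      z ∈ Gᶜ.edgeSet ∧ ∀ x ∈ z, ∀ y ∈ z, (colorSubgraph G ce c).Reachable x y) :
    #s ≤ (#{e ∈ G.edgeFinset | ce e = c}).choose 2 := by
  classical
  have hcompl : Gᶜ.edgeSet ⊆ (colorSubgraph G ce c)ᶜ.edgeSet :=
    edgeSet_mono (compl_le_compl_iff_le.2 (colorSubgraph_le _))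
  have hedges : (colorSubgraph G ce c).edgeFinset = {e ∈ G.edgeFinset | ce e = c} := by
    ext e
    rw [mem_edgeFinset, mem_edgeSet_colorSubgraph, mem_filter, mem_edgeFinset]
  rw [← hedges]
  exact card_le_choose_two_card_edgeFinset fun z hz => ⟨hcompl (hs z hz).1, (hs z hz).2⟩

theorem IsTMCColoring.card_compl_edgeFinset_le [DecidableRel G.Adj] (hT : IsTMCColoring G ce cv) :
    #Gᶜ.edgeFinset ≤ (#G.edgeFinset + Fintype.card V - colorsUsed G ce cv).choose 2 := by
  set K := G.edgeFinset.image ce ∪ univ.image cv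
  set ec : ℕ → ℕ := fun c => #{e ∈ G.edgeFinset | ce e = c}
  set nc : ℕ → ℕ := fun c => #{x | cv x = c}
  choose! F hF using fun z (hz : z ∈ Gᶜ.edgeFinset) =>
    hT.exists_colorSubgraph_reachable (mem_edgeFinset.1 hz)
  have hfiber : ∀ c ∈ K, #{z ∈ Gᶜ.edgeFinset | F z = c} ≤ (ec c + nc c - 1).choose 2 := by
    intro c _
    by_cases hc : c ∈ Set.range cv
    · obtain ⟨x, rfl⟩ := hc
      have hnc : 1 ≤ nc (cv x) := card_pos.2 ⟨x, mem_filter.2 ⟨mem_univ x, rfl⟩⟩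
      refine (card_le_choose_two_of_reachable_colorSubgraph fun z hz => ?_).trans
        (Nat.choose_le_choose 2 (Nat.le_sub_of_add_le (Nat.add_le_add_left hnc _)))
      obtain ⟨hz, hFz⟩ := mem_filter.1 hz
      exact ⟨mem_edgeFinset.1 hz, hFz ▸ (hF z hz).2⟩
    · rw [filter_false_of_mem fun z hz (hFz : F z = c) => hc (hFz ▸ (hF z hz).1), card_empty]
      exact Nat.zero_le _
  have hsum :
      colorsUsed G ce cv + ∑ c ∈ K, (ec c + nc c - 1) = #G.edgeFinset + Fintype.card V :=
    colorsUsed_add_sum_eq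
  calc #Gᶜ.edgeFinset = ∑ c ∈ K, #{z ∈ Gᶜ.edgeFinset | F z = c} :=
        card_eq_sum_card_fiberwise fun z hz => by
          obtain ⟨x, hx⟩ := (hF z hz).1
          exact mem_union_right _ (mem_image.2 ⟨x, mem_univ x, hx⟩)
    _ ≤ ∑ c ∈ K, (ec c + nc c - 1).choose 2 := sum_le_sum hfiber
    _ ≤ (∑ c ∈ K, (ec c + nc c - 1)).choose 2 := sum_choose_two_le _ _
    _ = _ := by congr 1; omega

noncomputable def starEdgeColoring (z : V) (L : Finset V) (e : Sym2 V) : ℕ :=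
  if e ∈ L.image (s(z, ·)) then 0 else colorCode (.inl e)

noncomputable def starVertexColoring (z v : V) : ℕ :=
  if v = z then 0 else colorCode (.inr v)

theorem isTMCColoring_star {z : V} {L : Finset V} (hadj : ∀ v ∈ L, G.Adj z v)
    (hL : ∀ u v, u ≠ v → ¬G.Adj u v → u ∈ L) :
    IsTMCColoring G (starEdgeColoring z L) (starVertexColoring z) := by
  intro u v huv
  by_cases h : G.Adj u v
  · refine ⟨h.toWalk, h.isPath_toWalk, starEdgeColoring z L s(u, v), fun e he => ?_,
      fun x hx => ?_⟩
    · simp only [Adj.toWalk, Walk.edges_cons, Walk.edges_nil, List.mem_singleton] at he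
      exact congrArg _ he
    · simp [Adj.toWalk] at hx
  · have hu := hL u v huv h
    have hv := hL v u huv.symm fun h' => h h'.symm
    refine ⟨.cons (hadj u hu).symm (.cons (hadj v hv) .nil), ?_, 0, ?_, ?_⟩
    · simp [Walk.cons_isPath_iff, huv, (hadj u hu).ne', (hadj v hv).ne]
    · simp only [Walk.edges_cons, Walk.edges_nil, List.mem_cons, List.not_mem_nil, or_false]
      rintro e (rfl | rfl) <;> rw [starEdgeColoring, if_pos]
      exacts [mem_image.2 ⟨u, hu, Sym2.eq_swap⟩, mem_image.2 ⟨v, hv, rfl⟩]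
    · simp [starVertexColoring]

theorem starVertexColoring_injective (z : V) : Function.Injective (starVertexColoring z) := by
  intro x y hxy
  simp only [starVertexColoring] at hxy
  split_ifs at hxy with hx hy hy
  · exact hx.trans hy.symm
  · exact absurd hxy.symm (colorCode_ne_zero _)
  · exact absurd hxy (colorCode_ne_zero _)
  · exact Sum.inr_injective (colorCode_injective hxy)

theorem starEdgeColoring_injOn (z : V) (L : Finset V) :
    Set.InjOn (starEdgeColoring z L) (↑(L.image (s(z, ·))))ᶜ := by
  intro e he e' he' hee'
  rw [Set.mem_compl_iff, mem_coe] at he he'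
  rw [starEdgeColoring, starEdgeColoring, if_neg he, if_neg he'] at hee'
  exact Sum.inl_injective (colorCode_injective hee')

theorem disjoint_starEdgeColoring_image_range (z : V) (L : Finset V) :
    Disjoint (starEdgeColoring z L '' (↑(L.image (s(z, ·))))ᶜ)
      (Set.range (starVertexColoring z)) := by
  rw [Set.disjoint_left]
  rintro _ ⟨e, he, rfl⟩ ⟨x, hx⟩
  rw [Set.mem_compl_iff, mem_coe] at he
  rw [starEdgeColoring, starVertexColoring, if_neg he] at hx
  split_ifs at hx
  · exact colorCode_ne_zero _ hx.symm
  · exact Sum.inr_ne_inl (colorCode_injective hx)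

theorem ncard_add_card_le_colorsUsed_star (z : V) (L : Finset V) :
    G.edgeSet.ncard + Fintype.card V ≤
      colorsUsed G (starEdgeColoring z L) (starVertexColoring z) + #L := by
  set star : Set (Sym2 V) := ↑(L.image (s(z, ·))) with hstar_def
  have hstar : star.ncard ≤ #L := by
    rw [Set.ncard_coe_finset]
    exact card_image_le
  calc G.edgeSet.ncard + Fintype.card V
      ≤ (G.edgeSet \ star).ncard + star.ncard + Fintype.card V :=
        Nat.add_le_add_right (Set.ncard_le_ncard_sdiff_add_ncard _ _ (Set.toFinite _)) _
    _ ≤ (starEdgeColoring z L '' (G.edgeSet \ star) ∪ Set.range (starVertexColoring z)).ncard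
          + #L := by
        rw [Set.ncard_union_eq ((disjoint_starEdgeColoring_image_range z L).mono_left
            (Set.image_mono (Set.sdiff_subset_compl _ _))) (Set.toFinite _) (Set.toFinite _),
          ((starEdgeColoring_injOn z L).mono (Set.sdiff_subset_compl _ _)).ncard_image,
          Set.ncard_range_of_injective (starVertexColoring_injective z), Nat.card_eq_fintype_card,
          ← hstar_def]
        omega
    _ ≤ colorsUsed G (starEdgeColoring z L) (starVertexColoring z) + #L :=
        Nat.add_le_add_right (Set.ncard_le_ncard
          (Set.union_subset_union_left _ (Set.image_mono Set.sdiff_subset)) (Set.toFinite _)) _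

theorem ncard_add_card_le_tmc_add {z : V} {L : Finset V} (hadj : ∀ v ∈ L, G.Adj z v)
    (hL : ∀ u v, u ≠ v → ¬G.Adj u v → u ∈ L) :
    G.edgeSet.ncard + Fintype.card V ≤ tmc G + #L :=
  (ncard_add_card_le_colorsUsed_star z L).trans
    (Nat.add_le_add_right (colorsUsed_le_tmc (isTMCColoring_star hadj hL)) _)

theorem ncard_add_card_le_tmc_compl_add {F : SimpleGraph V} {T : Finset V} {z : V}
    (hF : F.support ⊆ T) (hz : z ∉ T) :
    Fᶜ.edgeSet.ncard + Fintype.card V ≤ tmc Fᶜ + #T :=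
  ncard_add_card_le_tmc_add
    (fun v hv => compl_adj_of_support_subset hF hz (ne_of_mem_of_not_mem hv hz))
    fun u v huv h => hF (F.mem_support.2 ⟨v, by simpa [compl_adj, huv] using h⟩)

end DecidableEq

theorem tmc_add_le_of_choose_two_lt {t : ℕ}
    (h : (t - 1).choose 2 + G.edgeSet.ncard < (Fintype.card V).choose 2) :
    tmc G + t ≤ G.edgeSet.ncard + Fintype.card V := by
  classical
  have hm : G.edgeSet.ncard = #G.edgeFinset := by rw [← coe_edgeFinset, Set.ncard_coe_finset]
  have hcompl := G.card_edgeFinset_add_card_edgeFinset_compl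
  have ht : t ≤ G.edgeSet.ncard + Fintype.card V := by
    by_contra! ht
    have := Nat.choose_le_choose 2 (show Fintype.card V ≤ t - 1 by omega)
    omega
  suffices tmc G ≤ G.edgeSet.ncard + Fintype.card V - t by omega
  refine tmc_le_of_forall fun ce cv hT => ?_
  by_contra! hlt
  have hkey := hT.card_compl_edgeFinset_le
  have := Nat.choose_le_choose 2
    (show #G.edgeFinset + Fintype.card V - colorsUsed G ce cv ≤ t - 1 by omega)
  omega

theorem exists_connected_ncard_add_card_le_tmc_add {t e : ℕ} (ht : t < Fintype.card V)
    (he : e ≤ t.choose 2) :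
    ∃ G : SimpleGraph V, G.Connected ∧ G.edgeSet.ncard + e = (Fintype.card V).choose 2 ∧
      G.edgeSet.ncard + Fintype.card V ≤ tmc G + t := by
  classical
  obtain ⟨z⟩ : Nonempty V := Fintype.card_pos_iff.1 (by omega)
  obtain ⟨T, hTz, rfl⟩ := exists_subset_card_eq (s := univ.erase z) (n := t) <| by
    rw [card_erase_of_mem (mem_univ z), card_univ]
    omega
  obtain ⟨S, hST, rfl⟩ :=
      exists_subset_card_eq (s := T.offDiag.image Sym2.mk.uncurry) (n := e) <| by
    rwa [Sym2.card_image_offDiag]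
  set F := fromEdgeSet (S : Set (Sym2 V))
  have hFS : F.edgeFinset = S := by
    ext e
    rw [mem_edgeFinset, edgeSet_fromEdgeSet, Set.mem_sdiff, mem_coe, Sym2.mem_diagSet,
      and_iff_left_iff_imp]
    exact fun he => (mem_image_offDiag_iff.1 (hST he)).1
  have hF : F.support ⊆ T := fun v hv => by
    obtain ⟨w, hvw⟩ := F.mem_support.1 hv
    exact (mem_image_offDiag_iff.1 (hST ((fromEdgeSet_adj _).1 hvw).1)).2 v (Sym2.mem_mk_left v w)
  have hz : z ∉ T := fun h => (mem_erase.1 (hTz h)).1 rfl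
  refine ⟨Fᶜ, connected_compl_of_support_subset hF hz, ?_,
    ncard_add_card_le_tmc_compl_add hF hz⟩
  rw [← hFS, ← coe_edgeFinset, Set.ncard_coe_finset, add_comm]
  convert card_edgeFinset_add_card_edgeFinset_compl F

end Fintype

end SimpleGraph
theorem gfun_le_choose_two (n k : ℕ) : gfun n k ≤ n.choose 2 :=
  csSup_le' fun _ hg => hg.1

theorem le_gfun {n k g : ℕ} (hg : g ≤ n.choose 2)
    (h : ∀ (V : Type) [Fintype V] (G : SimpleGraph V), G.Connected →
      Fintype.card V = n → G.edgeSet.ncard ≤ g → tmc G ≤ k) :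
    g ≤ gfun n k :=
  le_csSup ⟨n.choose 2, fun _ hx => hx.1⟩ ⟨hg, h⟩

theorem gfun_le_ncard_sub_one {n k : ℕ} {V : Type} [Fintype V] {G : SimpleGraph V}
    (hG : G.Connected) (hV : Fintype.card V = n) (hk : k < tmc G) :
    gfun n k ≤ G.edgeSet.ncard - 1 :=
  csSup_le' fun g ⟨_, hg⟩ => by
    by_contra! hlt
    have := hg V G hG hV (by omega)
    omega

theorem gfun_le_sub_one {n k t m : ℕ} (ht : t < n) (hm : m ≤ n.choose 2)
    (hmt : n.choose 2 ≤ m + t.choose 2) (hk : k + t < m + n) : gfun n k ≤ m - 1 := by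
  obtain ⟨G, hG, hGm, hGtmc⟩ := SimpleGraph.exists_connected_ncard_add_card_le_tmc_add
    (V := Fin n) (t := t) (e := n.choose 2 - m) (by simpa using ht) (by omega)
  rw [Fintype.card_fin] at hGm hGtmc
  have := gfun_le_ncard_sub_one hG (Fintype.card_fin n) (k := k) (by omega)
  omega

theorem le_gfun_of_choose_two_lt {n k t g : ℕ} (hg : (t - 1).choose 2 + g < n.choose 2)
    (hk : g + n ≤ k + t) : g ≤ gfun n k :=
  le_gfun (by omega) fun V _ G _ hV hm => by
    subst hV
    classical
    have := SimpleGraph.tmc_add_le_of_choose_two_lt (G := G) (t := t) (by omega)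
    omega

theorem stmt19_general (n k : ℕ) :
    (∀ t : ℕ, 2 ≤ t → t ≤ n - 1 →
      (n - t).choose 2 + t * (n - t - 1) + n ≤ k →
      k ≤ (n - t).choose 2 + t * (n - t) + n - 2 →
      gfun n k = k - n + t) ∧
    (∀ t : ℕ, 2 ≤ t → t ≤ n - 1 →
      k = (n - t).choose 2 + t * (n - t) + n - 1 →
      gfun n k = k - n + t - 1) ∧
    (k = n.choose 2 + n - 1 → gfun n k = n.choose 2 - 1) ∧
    (k = n.choose 2 + n → gfun n k = n.choose 2) := by
  have arith (t : ℕ) (ht : 1 ≤ t) (htn : t < n) :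
      n.choose 2 = (n - t).choose 2 + t * (n - t) + t.choose 2 ∧
        t.choose 2 = (t - 1).choose 2 + (t - 1) ∧ t * (n - t - 1) + t = t * (n - t) := by
    refine ⟨choose_two_eq_of_le htn.le, ?_, ?_⟩
    · rw [← choose_two_succ, Nat.sub_add_cancel ht]
    · rw [← Nat.mul_add_one, Nat.sub_add_cancel (by omega)]
  refine ⟨fun t ht2 htn hlo hhi => ?_, fun t ht2 htn hk => ?_, fun hk => ?_, fun hk => ?_⟩
  · obtain ⟨hC, hCt, hmul⟩ := arith t (by omega) (by omega)
    exact le_antisymm (gfun_le_sub_one (t := t) (m := k - n + t + 1) (by omega) (by omega)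
      (by omega) (by omega)) (le_gfun_of_choose_two_lt (t := t) (by omega) (by omega))
  · obtain ⟨hC, hCt, hmul⟩ := arith t (by omega) (by omega)
    exact le_antisymm (gfun_le_sub_one (t := t - 1) (m := k - n + t) (by omega) (by omega)
      (by omega) (by omega)) (le_gfun_of_choose_two_lt (t := t) (by omega) (by omega))
  · rcases Nat.lt_or_ge n 2 with hn | hn
    · have := gfun_le_choose_two n k
      have := Nat.choose_eq_zero_of_lt (show n < 2 from hn)
      omega
    · have := Nat.choose_pos hn
      exact le_antisymm (gfun_le_sub_one (t := 0) (m := n.choose 2) (by omega) le_rfl (by simp)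
        (by omega)) (le_gfun_of_choose_two_lt (t := 2) (by simpa using this) (by omega))
  · exact le_antisymm (gfun_le_choose_two n k) (le_gfun le_rfl fun V _ G _ hV hm =>
      (tmc_le_ncard_add_card G).trans (by omega))

theorem stmt19 (n k : ℕ) (hk1 : n ≤ k) (hk2 : k ≤ n.choose 2 + n) :
    (∀ t : ℕ, 2 ≤ t → t ≤ n - 1 →
      (n - t).choose 2 + t * (n - t - 1) + n ≤ k →
      k ≤ (n - t).choose 2 + t * (n - t) + n - 2 →
      gfun n k = k - n + t) ∧
    (∀ t : ℕ, 2 ≤ t → t ≤ n - 1 →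
      k = (n - t).choose 2 + t * (n - t) + n - 1 →
      gfun n k = k - n + t - 1) ∧
    (k = n.choose 2 + n - 1 → gfun n k = n.choose 2 - 1) ∧
    (k = n.choose 2 + n → gfun n k = n.choose 2) :=
  stmt19_general n k
end
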